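/- arXiv:2303.10277 — 3 statements merged into one kernel-verified Lean document; each statement's English description precedes it below -/
import Mathlib

section
/- Let X ⊆ ℝ^{n_x}, U ⊆ ℝ^{n_u}, and let Φ : ℝ^{n_x} → ℝ^{n_z} be differentiable with Jacobian ∇Φ(x). Let f : X → ℝ^{n_x}, g(x) an n_x × n_u matrix, f_z : ℝ^{n_z} → ℝ^{n_z}, g_z(z) an n_z × n_v matrix, and C(x), d(x) be such that for every x ∈ X and u ∈ ℝ^{n_u}: ∇Φ(x)(f(x) + g(x)u) = f_z(Φ(x)) + g_z(Φ(x))(C(x)u + d(x)). Let φ_z : ℝ^{n_z} → ℝ be differentiable and define φ := φ_z ∘ Φ. Define Φ_U(x) := {C(x)u + d(x) : u ∈ U}, and let V : ℝ^{n_z} → Set(ℝ^{n_v}) satisfy V(z) ⊆ ⋂_{x : Φ(x) = z} Φ_U(x) for all z. Then for every x ∈ X with φ(x) = 0: if there exists v ∈ V(Φ(x)) with ∇φ_z(Φ(x)) · (f_z(Φ(x)) + g_z(Φ(x)) v) < 0, then there exists u ∈ U with ∇φ(x) · (f(x) + g(x)u) < 0. -/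
open Matrix

theorem HasFDerivAt.fderiv_comp_apply {𝕜 E F G : Type*} [NontriviallyNormedField 𝕜]
    [NormedAddCommGroup E] [NormedSpace 𝕜 E] [NormedAddCommGroup F] [NormedSpace 𝕜 F]
    [NormedAddCommGroup G] [NormedSpace 𝕜 G] {g : F → G} {f : E → F} {f' : E →L[𝕜] F} {x : E}
    (hf : HasFDerivAt f f' x) (hg : DifferentiableAt 𝕜 g (f x)) (w : E) :
    fderiv 𝕜 (g ∘ f) x w = fderiv 𝕜 g (f x) (f' w) := by
  rw [(hg.hasFDerivAt.comp x hf).fderiv, ContinuousLinearMap.comp_apply]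

/-- **Theorem 1 (Feasibility consistency).**
Suppose the concrete system `ẋ = f(x) + g(x)u` and the abstract system
`ż = f_z(z) + g_z(z)v` are related through the smooth map `Φ` (with Jacobian `JΦ`)
via `∇Φ(x)(f(x) + g(x)u) = f_z(Φ(x)) + g_z(Φ(x))(C(x)u + d(x))`, let
`φ := φ_z ∘ Φ`, let `Φ_U(x) := {C(x)u + d(x) : u ∈ U}` be the implementable
abstract controls, and suppose the abstract control limit satisfies
`V(z) ⊆ ⋂_{x : Φ(x) = z} Φ_U(x)`.  Then for every `x ∈ X` with `φ(x) = 0`,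
feasibility of the abstract safe-control constraint
`φ̇_z(Φ(x), v) = ∇φ_z(Φ(x))·(f_z(Φ(x)) + g_z(Φ(x))v) < 0` for some `v ∈ V(Φ(x))`
implies feasibility of the concrete constraint
`φ̇(x, u) = ∇φ(x)·(f(x) + g(x)u) < 0` for some `u ∈ U`. -/
theorem feasibility_consistency
    {nx nu nz nv : ℕ}
    (X : Set (Fin nx → ℝ)) (U : Set (Fin nu → ℝ))
    (Φ : (Fin nx → ℝ) → (Fin nz → ℝ))
    (JΦ : (Fin nx → ℝ) → Matrix (Fin nz) (Fin nx) ℝ)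
    (hΦ : ∀ x, HasFDerivAt Φ (LinearMap.toContinuousLinearMap (Matrix.mulVecLin (JΦ x))) x)
    (f : (Fin nx → ℝ) → (Fin nx → ℝ))
    (g : (Fin nx → ℝ) → Matrix (Fin nx) (Fin nu) ℝ)
    (fz : (Fin nz → ℝ) → (Fin nz → ℝ))
    (gz : (Fin nz → ℝ) → Matrix (Fin nz) (Fin nv) ℝ)
    (C : (Fin nx → ℝ) → Matrix (Fin nv) (Fin nu) ℝ)
    (d : (Fin nx → ℝ) → (Fin nv → ℝ))
    (hrel : ∀ x ∈ X, ∀ u : Fin nu → ℝ,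
      (JΦ x) *ᵥ (f x + (g x) *ᵥ u) = fz (Φ x) + (gz (Φ x)) *ᵥ ((C x) *ᵥ u + d x))
    (φz : (Fin nz → ℝ) → ℝ)
    (hφz : Differentiable ℝ φz)
    (V : (Fin nz → ℝ) → Set (Fin nv → ℝ))
    (hV : ∀ z : Fin nz → ℝ, V z ⊆ ⋂ x ∈ {x | Φ x = z}, (fun u => (C x) *ᵥ u + d x) '' U) :
    ∀ x ∈ X, φz (Φ x) = 0 →
      (∃ v ∈ V (Φ x), fderiv ℝ φz (Φ x) (fz (Φ x) + (gz (Φ x)) *ᵥ v) < 0) →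
      ∃ u ∈ U, fderiv ℝ (φz ∘ Φ) x (f x + (g x) *ᵥ u) < 0 := by
  rintro x hx - ⟨v, hvV, hv⟩
  obtain ⟨u, hu, rfl⟩ := Set.mem_iInter₂.mp (hV (Φ x) hvV) x rfl
  refine ⟨u, hu, ?_⟩
  rwa [(hΦ x).fderiv_comp_apply (hφz (Φ x)), LinearMap.coe_toContinuousLinearMap',
    Matrix.mulVecLin_apply, hrel x hx u]
end

section
/- Let Z ⊆ ℝ^{n_z}, 0 < M_min ≤ M_max, and R_v := [M_min, M_max]. Let φ : ℝ^{n_z} × ℝ → ℝ be differentiable with ∂φ/∂M(z, M) ≠ 0 on {(z,M) ∈ Z × R_v : φ(z,M) = 0}. Let f_z : ℝ^{n_z} → ℝ^{n_z} and g_z(z) be continuous (so that for each (z, M) the minimum m(z,M) := min over ‖v‖_p ≤ M of ∇_z φ(z,M) · (f_z(z) + g_z(z)v) is attained on the compact ball). Suppose Ṁ_* ∈ ℝ satisfies: inf over (z, M) ∈ Z × R_v with φ(z,M) = 0 of ( − m(z,M) / |∂φ/∂M(z,M)| ) > Ṁ_* ≥ 0. Then for every (z, M) ∈ Z × R_v with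 φ(z, M) = 0 and every Ṁ ∈ ℝ with |Ṁ| ≤ Ṁ_*, there exists v with ‖v‖_p ≤ M such that ∇_z φ(z,M) · (f_z(z) + g_z(z)v) + ∂φ/∂M(z,M) · Ṁ < 0. -/
open Matrix
open scoped ENNReal

/-!
Fix a point `(z, M)` of the zero level set. Its ratio `-m(z, M) / |∂φ/∂M|` belongs to the set
whose infimum exceeds `Ṁ_*`, so `Ṁ_* · |∂φ/∂M| < -m(z, M)`. Since `∂φ/∂M · Ṁ ≤ Ṁ_* · |∂φ/∂M|`,
the infimum `m(z, M)` lies strictly below `-∂φ/∂M · Ṁ`, and some control in the ball attains a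
value below that bound.
-/

namespace Real

/-- Sets of reals that are not bounded below have infimum `0`, hence the sign condition. -/
theorem lt_of_lt_sInf_of_mem {s : Set ℝ} {c y : ℝ} (hc : 0 ≤ c) (h : c < sInf s)
    (hy : y ∈ s) : c < y := by
  have hbdd : BddBelow s := by
    by_contra hs
    rw [sInf_of_not_bddBelow hs] at h
    exact hc.not_gt h
  exact h.trans_le (csInf_le hbdd hy)

/-- The empty set has infimum `0`, so a negative infimum forces nonemptiness. -/
theorem exists_lt_of_sInf_lt_of_neg {s : Set ℝ} {b : ℝ} (h : sInf s < b) (hs : sInf s < 0) :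
    ∃ a ∈ s, a < b := by
  have hne : s.Nonempty := by
    by_contra hempty
    rw [Set.not_nonempty_iff_eq_empty.mp hempty, sInf_empty] at hs
    exact hs.false
  exact exists_lt_of_csInf_lt hne h

end Real

/-- If `b = 0` then `a / |b| = 0 ≤ c`, so the hypothesis rules this case out. -/
theorem mul_abs_lt_of_lt_div_abs {a b c : ℝ} (hc : 0 ≤ c) (h : c < a / |b|) : c * |b| < a := by
  rcases eq_or_ne b 0 with rfl | hb
  · simp only [abs_zero, div_zero] at h
    exact absurd hc h.not_ge
  · exact (lt_div_iff₀ (abs_pos.mpr hb)).mp h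

theorem mul_le_mul_abs_of_abs_le {a b c : ℝ} (h : |b| ≤ c) : a * b ≤ c * |a| :=
  calc a * b ≤ |a * b| := le_abs_self _
    _ = |a| * |b| := abs_mul a b
    _ ≤ |a| * c := mul_le_mul_of_nonneg_left h (abs_nonneg a)
    _ = c * |a| := mul_comm _ _

theorem persistent_feasibility_on_extended_abstraction_general
    {nz nv : ℕ} (p : ℝ≥0∞)
    (Z : Set (Fin nz → ℝ)) (Mmin Mmax : ℝ)
    (φ : (Fin nz → ℝ) × ℝ → ℝ)
    (fz : (Fin nz → ℝ) → (Fin nz → ℝ))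
    (gz : (Fin nz → ℝ) → Matrix (Fin nz) (Fin nv) ℝ)
    (m : (Fin nz → ℝ) → ℝ → ℝ)
    (hm : ∀ z M, m z M = sInf {y : ℝ | ∃ v : PiLp p (fun _ : Fin nv => ℝ), ‖v‖ ≤ M ∧
      y = fderiv ℝ φ (z, M) (fz z + gz z *ᵥ (fun i => v i), 0)})
    (Mdotstar : ℝ)
    (hinf : Mdotstar < sInf {y : ℝ | ∃ z ∈ Z, ∃ M ∈ Set.Icc Mmin Mmax, φ (z, M) = 0 ∧
      y = -(m z M) / |fderiv ℝ φ (z, M) (0, 1)|}) :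
    ∀ z ∈ Z, ∀ M ∈ Set.Icc Mmin Mmax, φ (z, M) = 0 →
      ∀ Mdot : ℝ, |Mdot| ≤ Mdotstar →
        ∃ v : PiLp p (fun _ : Fin nv => ℝ), ‖v‖ ≤ M ∧
          fderiv ℝ φ (z, M) (fz z + gz z *ᵥ (fun i => v i), 0)
            + fderiv ℝ φ (z, M) (0, 1) * Mdot < 0 := by
  intro z hz M hM hφ0 Mdot hMdot
  set D := fderiv ℝ φ (z, M) (0, 1)
  have hMdotstar : 0 ≤ Mdotstar := (abs_nonneg Mdot).trans hMdot
  have hmargin : Mdotstar * |D| < -m z M :=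
    mul_abs_lt_of_lt_div_abs hMdotstar
      (Real.lt_of_lt_sInf_of_mem hMdotstar hinf ⟨z, hz, M, hM, hφ0, rfl⟩)
  have hdrift : D * Mdot ≤ Mdotstar * |D| := mul_le_mul_abs_of_abs_le hMdot
  have hmneg : m z M < 0 := by linarith [mul_nonneg hMdotstar (abs_nonneg D)]
  rw [hm] at hmargin hmneg
  obtain ⟨_, ⟨v, hv, rfl⟩, hlt⟩ :=
    Real.exists_lt_of_sInf_lt_of_neg (b := -(D * Mdot)) (by linarith) hmneg
  exact ⟨v, hv, by linarith⟩

/-- **Lemma 5 (Persistent feasibility on the extended abstraction).**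
Let `φ(z, M)` be a differentiable safety index on the extended abstract space
`Z × [M_min, M_max]` whose partial derivative `∂φ/∂M = Dφ(0,1)` does not vanish on the
zero level set, let `f_z, g_z` be continuous, and let
`m(z,M) := min_{‖v‖_p ≤ M} ∇_zφ(z,M)·(f_z(z) + g_z(z)v)` (the minimum over the compact
`ℓ^p`-ball, realized here as an infimum).  If
`Ṁ_* ≥ 0` and `inf_{(z,M) ∈ Z × R_v, φ(z,M)=0} ( −m(z,M) / |∂φ/∂M(z,M)| ) > Ṁ_*`,
then for every `(z,M) ∈ Z × R_v` with `φ(z,M) = 0` and every `Ṁ` with `|Ṁ| ≤ Ṁ_*`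
there exists `v` with `‖v‖_p ≤ M` such that
`∇_zφ(z,M)·(f_z(z) + g_z(z)v) + ∂φ/∂M(z,M)·Ṁ < 0`. -/
theorem persistent_feasibility_on_extended_abstraction
    {nz nv : ℕ} (p : ℝ≥0∞) (hp : 1 ≤ p)
    (Z : Set (Fin nz → ℝ)) (Mmin Mmax : ℝ) (hMmin : 0 < Mmin) (hMm : Mmin ≤ Mmax)
    (φ : (Fin nz → ℝ) × ℝ → ℝ) (hφ : Differentiable ℝ φ)
    (fz : (Fin nz → ℝ) → (Fin nz → ℝ))
    (gz : (Fin nz → ℝ) → Matrix (Fin nz) (Fin nv) ℝ)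
    (hfz : Continuous fz) (hgz : Continuous gz)
    (hpM : ∀ z ∈ Z, ∀ M ∈ Set.Icc Mmin Mmax, φ (z, M) = 0 →
      fderiv ℝ φ (z, M) (0, 1) ≠ 0)
    (m : (Fin nz → ℝ) → ℝ → ℝ)
    (hm : ∀ z M, m z M = sInf {y : ℝ | ∃ v : PiLp p (fun _ : Fin nv => ℝ), ‖v‖ ≤ M ∧
      y = fderiv ℝ φ (z, M) (fz z + gz z *ᵥ (fun i => v i), 0)})
    (Mdotstar : ℝ) (hMdotstar : 0 ≤ Mdotstar)
    (hinf : Mdotstar < sInf {y : ℝ | ∃ z ∈ Z, ∃ M ∈ Set.Icc Mmin Mmax, φ (z, M) = 0 ∧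
      y = -(m z M) / |fderiv ℝ φ (z, M) (0, 1)|}) :
    ∀ z ∈ Z, ∀ M ∈ Set.Icc Mmin Mmax, φ (z, M) = 0 →
      ∀ Mdot : ℝ, |Mdot| ≤ Mdotstar →
        ∃ v : PiLp p (fun _ : Fin nv => ℝ), ‖v‖ ≤ M ∧
          fderiv ℝ φ (z, M) (fz z + gz z *ᵥ (fun i => v i), 0)
            + fderiv ℝ φ (z, M) (0, 1) * Mdot < 0 :=
  persistent_feasibility_on_extended_abstraction_general p Z Mmin Mmax φ fz gz m hm Mdotstar hinf
end

section
/- Let d_min := 0.05, and let 0 < M_min ≤ M_max and Ṁ_max ≥ 0. Suppose k ∈ ℝ satisfies k ≥ 2 · (0.8 · 1) + (0.8² − d_min²) · Ṁ_max / M_min. Then for all d ∈ [0, 0.8], ḋ ∈ [−1, 1], and M ∈ [M_min, M_max] such that d_min² − d² − k·ḋ/M = 0, we have −2 d ḋ − k · (M/M) + (k |ḋ| / M²) · Ṁ_max ≤ 0; that is, choosing d̈ = M makes φ̇ = −2dḋ − k d̈/M + (k ḋ/M²)Ṁ ≤ 0 for every Ṁ with |Ṁ| ≤ Ṁ_max.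 -/
/-!
On the zero level set of `φ* = d_min² − d² − k ḋ / M` we have `k ḋ = (d_min² − d²) M`, so the
velocity-dependent drift coefficient `k |ḋ| / M²` equals `|d_min² − d²| / M`, which is at most
`|d_min² − d²|_max / M_min`. With `d̈ = M` the term `−k d̈ / M` contributes exactly `−k`, and the
lower bound on `k` is precisely the sum of the worst cases of the two remaining terms of `φ̇*`.
-/

lemma neg_two_mul_mul_le_of_abs_le {x y a b : ℝ} (hx : |x| ≤ a) (hy : |y| ≤ b) :
    -2 * x * y ≤ 2 * (a * b) := by
  have hxy : |x| * |y| ≤ a * b := mul_le_mul hx hy (abs_nonneg y) ((abs_nonneg x).trans hx)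
  have := neg_abs_le (x * y)
  rw [abs_mul] at this
  linarith

lemma abs_sq_sub_sq_le {dmin d D : ℝ} (hd : |d| ≤ D) (hD : 2 * dmin ^ 2 ≤ D ^ 2) :
    |dmin ^ 2 - d ^ 2| ≤ D ^ 2 - dmin ^ 2 := by
  have hd2 : d ^ 2 ≤ D ^ 2 := sq_le_sq' (abs_le.mp hd).1 (abs_le.mp hd).2
  rw [abs_le]
  constructor <;> nlinarith [sq_nonneg d]

lemma mul_abs_div_sq_eq_of_sub_mul_div_eq_zero {c k v M : ℝ} (hk : 0 ≤ k) (hM : 0 < M)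
    (h : c - k * v / M = 0) : k * |v| / M ^ 2 = |c| / M := by
  have hkv : k * v = c * M := by
    field_simp at h
    linarith
  have hkv_abs : k * |v| = |c| * M := by
    rw [← abs_of_nonneg hk, ← abs_of_pos hM, ← abs_mul, ← abs_mul, hkv]
  rw [hkv_abs]
  field_simp

lemma mul_le_abs_mul_of_abs_le {a x B : ℝ} (hx : |x| ≤ B) : a * x ≤ |a| * B :=
  calc a * x ≤ |a * x| := le_abs_self _
    _ = |a| * |x| := abs_mul a x
    _ ≤ |a| * B := mul_le_mul_of_nonneg_left hx (abs_nonneg a)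

section PersistentFeasibility

variable {dmin D V Mmin Mdotmax k d ddot M : ℝ}

lemma safetyIndex_gain_nonneg (hMmin : 0 < Mmin) (hMdot : 0 ≤ Mdotmax)
    (hD : 2 * dmin ^ 2 ≤ D ^ 2) (hd : |d| ≤ D) (hddot : |ddot| ≤ V)
    (hk : 2 * (D * V) + (D ^ 2 - dmin ^ 2) * Mdotmax / Mmin ≤ k) : 0 ≤ k := by
  have hDV : 0 ≤ D * V := mul_nonneg ((abs_nonneg d).trans hd) ((abs_nonneg ddot).trans hddot)
  have hdrift : 0 ≤ (D ^ 2 - dmin ^ 2) * Mdotmax / Mmin := by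
    have : 0 ≤ D ^ 2 - dmin ^ 2 := by nlinarith [sq_nonneg dmin]
    positivity
  linarith

theorem safetyIndex_deriv_nonpos (hMmin : 0 < Mmin) (hMdot : 0 ≤ Mdotmax)
    (hD : 2 * dmin ^ 2 ≤ D ^ 2) (hd : |d| ≤ D) (hddot : |ddot| ≤ V) (hM : Mmin ≤ M)
    (hk : 2 * (D * V) + (D ^ 2 - dmin ^ 2) * Mdotmax / Mmin ≤ k)
    (hlevel : dmin ^ 2 - d ^ 2 - k * ddot / M = 0) :
    -2 * d * ddot - k + (k * |ddot| / M ^ 2) * Mdotmax ≤ 0 := by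
  have hM0 : 0 < M := hMmin.trans_le hM
  have hk0 := safetyIndex_gain_nonneg hMmin hMdot hD hd hddot hk
  have hcross : -2 * d * ddot ≤ 2 * (D * V) := neg_two_mul_mul_le_of_abs_le hd hddot
  have hdrift : (k * |ddot| / M ^ 2) * Mdotmax ≤ (D ^ 2 - dmin ^ 2) * Mdotmax / Mmin := by
    rw [mul_abs_div_sq_eq_of_sub_mul_div_eq_zero hk0 hM0 hlevel, div_mul_eq_mul_div]
    have hbound := abs_sq_sub_sq_le (dmin := dmin) hd hD
    gcongr
    exact mul_nonneg ((abs_nonneg _).trans hbound) hMdot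
  linarith

end PersistentFeasibility

theorem safety_index_parameter_bound_general
    (Mmin Mmax Mdotmax k : ℝ)
    (hMmin : 0 < Mmin) (hMdot : 0 ≤ Mdotmax)
    (hk : k ≥ 2 * (0.8 * 1) + ((0.8 : ℝ) ^ 2 - (0.05 : ℝ) ^ 2) * Mdotmax / Mmin) :
    ∀ d ∈ Set.Icc (0 : ℝ) 0.8, ∀ ddot ∈ Set.Icc (-1 : ℝ) 1,
      ∀ M ∈ Set.Icc Mmin Mmax,
        (0.05 : ℝ) ^ 2 - d ^ 2 - k * ddot / M = 0 →
          (-2 * d * ddot - k * (M / M) + (k * |ddot| / M ^ 2) * Mdotmax ≤ 0 ∧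
            ∀ Mdot : ℝ, |Mdot| ≤ Mdotmax →
              -2 * d * ddot - k * (M / M) + (k * ddot / M ^ 2) * Mdot ≤ 0) := by
  intro d hd ddot hddot M hM hlevel
  have hd' : |d| ≤ 0.8 := abs_le.mpr ⟨by linarith [hd.1], hd.2⟩
  have hddot' : |ddot| ≤ 1 := abs_le.mpr hddot
  have hD : 2 * (0.05 : ℝ) ^ 2 ≤ 0.8 ^ 2 := by norm_num
  have hk0 : 0 ≤ k := safetyIndex_gain_nonneg hMmin hMdot hD hd' hddot' hk
  have hfeasible := safetyIndex_deriv_nonpos hMmin hMdot hD hd' hddot' hM.1 hk hlevel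
  have hcoeff : |k * ddot / M ^ 2| = k * |ddot| / M ^ 2 := by
    rw [abs_div, abs_mul, abs_of_nonneg hk0, abs_of_nonneg (sq_nonneg M)]
  rw [div_self (hMmin.trans_le hM.1).ne', mul_one]
  refine ⟨hfeasible, fun Mdot hMdot' => ?_⟩
  have hworst := mul_le_abs_mul_of_abs_le (a := k * ddot / M ^ 2) hMdot'
  rw [hcoeff] at hworst
  linarith

/-- **Safety index parameter derivation (Section V-B / Appendix).**
With `d_min = 0.05`, `0 < M_min ≤ M_max` and `Ṁ_max ≥ 0`, if
`k ≥ 2·(0.8·1) + (0.8² − d_min²) · Ṁ_max / M_min`, then for all `d ∈ [0, 0.8]`,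
`ḋ ∈ [−1, 1]` and `M ∈ [M_min, M_max]` on the zero level set of
`φ* = d_min² − d² − k ḋ / M`, choosing `d̈ = M` gives
`φ̇* = −2dḋ − k·(M/M) + (k|ḋ|/M²)·Ṁ_max ≤ 0`, and hence
`−2dḋ − k·(M/M) + (kḋ/M²)·Ṁ ≤ 0` for every `Ṁ` with `|Ṁ| ≤ Ṁ_max`. -/
theorem safety_index_parameter_bound
    (Mmin Mmax Mdotmax k : ℝ)
    (hMmin : 0 < Mmin) (hMm : Mmin ≤ Mmax) (hMdot : 0 ≤ Mdotmax)
    (hk : k ≥ 2 * (0.8 * 1) + ((0.8 : ℝ) ^ 2 - (0.05 : ℝ) ^ 2) * Mdotmax / Mmin) :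
    ∀ d ∈ Set.Icc (0 : ℝ) 0.8, ∀ ddot ∈ Set.Icc (-1 : ℝ) 1,
      ∀ M ∈ Set.Icc Mmin Mmax,
        (0.05 : ℝ) ^ 2 - d ^ 2 - k * ddot / M = 0 →
          (-2 * d * ddot - k * (M / M) + (k * |ddot| / M ^ 2) * Mdotmax ≤ 0 ∧
            ∀ Mdot : ℝ, |Mdot| ≤ Mdotmax →
              -2 * d * ddot - k * (M / M) + (k * ddot / M ^ 2) * Mdot ≤ 0) :=
  safety_index_parameter_bound_general Mmin Mmax Mdotmax k hMmin hMdot hk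
end
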